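/- arXiv:1403.0548 — 3 statements merged into one kernel-verified Lean document; each statement's English description precedes it below -/
import Mathlib

section
/- Let K be a field equipped with a non-Archimedean additive valuation val : K → ℝ ∪ {∞}. Let f = Σ_{(i,j)∈S} a_{ij} x^i y^j be a nonzero polynomial in K[x,y], where S is the support of f (so a_{ij} ≠ 0 for all (i,j) ∈ S). If p = (p₁,p₂) ∈ (K\{0})² satisfies f(p₁,p₂) = 0, then the minimum over (i,j) ∈ S of val(a_{ij}) + i·val(p₁) + j·val(p₂) is attained for at least two distinct elements of S. -/
open Finset

namespace AddValuation

variable {R Γ₀ ι : Type*} [Ring R] [LinearOrderedAddCommMonoidWithTop Γ₀] (v : AddValuation R Γ₀)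

/-- If one term had strictly smaller valuation than all the others, it would equal minus
the sum of the others, whose valuation is strictly larger. -/
theorem exists_ne_eq_inf_of_sum_eq_zero {s : Finset ι} {f : ι → R}
    (hinf : s.inf (fun i ↦ v (f i)) ≠ ⊤) (hsum : ∑ i ∈ s, f i = 0) :
    ∃ i ∈ s, ∃ j ∈ s, i ≠ j ∧
      v (f i) = s.inf (fun i ↦ v (f i)) ∧ v (f j) = s.inf (fun i ↦ v (f i)) := by
  classical
  have hs : s.Nonempty := nonempty_iff_ne_empty.2 fun h ↦ hinf (by simp [h])
  obtain ⟨i, hi, hmin⟩ := exists_mem_eq_inf s hs fun i ↦ v (f i)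
  by_contra! hunique
  have hlt : ∀ j ∈ s.erase i, v (f i) < v (f j) := fun j hj ↦
    (hmin ▸ inf_le (mem_of_mem_erase hj)).lt_of_ne fun h ↦
      hunique i hi j (mem_of_mem_erase hj) (ne_of_mem_erase hj).symm hmin.symm (h ▸ hmin.symm)
  have hrest : ∑ j ∈ s.erase i, f j = -f i :=
    eq_neg_of_add_eq_zero_right ((add_sum_erase s f hi).trans hsum)
  have hlt_rest := v.map_lt_sum (hmin ▸ hinf) hlt
  rw [hrest, map_neg] at hlt_rest
  exact hlt_rest.false

end AddValuation

/-- Let `K` be a field with a non-Archimedean additive valuation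
`v : K → ℝ ∪ {∞}`.  Let `f = Σ_{(i,j)∈S} a_{ij} x^i y^j` be a nonzero polynomial whose
support is exactly `S` (so `a ij ≠ 0` for all `ij ∈ S`).  If a point `p = (p₁,p₂)` of the
torus satisfies `f p = 0`, then the minimum over `S` of `v (a ij) + i • v p₁ + j • v p₂`
is attained at at least two distinct elements of `S`. -/
theorem min_attained_twice_of_zero {K : Type*} [Field K]
    (v : K → WithTop ℝ)
    (hv0 : ∀ a : K, v a = ⊤ ↔ a = 0)
    (hvmul : ∀ a b : K, v (a * b) = v a + v b)
    (hvadd : ∀ a b : K, min (v a) (v b) ≤ v (a + b))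
    (S : Finset (ℕ × ℕ)) (hS : S.Nonempty) (a : ℕ × ℕ → K)
    (ha : ∀ ij ∈ S, a ij ≠ 0)
    (p₁ p₂ : K) (hp₁ : p₁ ≠ 0) (hp₂ : p₂ ≠ 0)
    (m : ℕ × ℕ → WithTop ℝ)
    (hm : ∀ ij : ℕ × ℕ, m ij = v (a ij) + ij.1 • v p₁ + ij.2 • v p₂)
    (hzero : ∑ ij ∈ S, a ij * p₁ ^ ij.1 * p₂ ^ ij.2 = 0) :
    ∃ ij ∈ S, ∃ kl ∈ S, ij ≠ kl ∧ m ij = S.inf m ∧ m kl = S.inf m := by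
  have hv1 : v 1 = 0 :=
    WithTop.add_left_cancel ((hv0 1).not.2 one_ne_zero) (by rw [← hvmul, mul_one, add_zero])
  let w := AddValuation.of v ((hv0 0).2 rfl) hv1 hvadd hvmul
  have hterm : ∀ ij, w (a ij * p₁ ^ ij.1 * p₂ ^ ij.2) = m ij := fun ij ↦ by
    simp only [w, AddValuation.map_mul, AddValuation.map_pow, AddValuation.of_apply, hm]
  have hinf : S.inf m ≠ ⊤ := by
    obtain ⟨ij, hij, hmin⟩ := exists_mem_eq_inf S hS m
    rw [hmin, ← hterm, Ne, AddValuation.top_iff]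
    exact mul_ne_zero (mul_ne_zero (ha ij hij) (pow_ne_zero _ hp₁)) (pow_ne_zero _ hp₂)
  have hfun : (fun ij ↦ w (a ij * p₁ ^ ij.1 * p₂ ^ ij.2)) = m := funext hterm
  simpa only [hfun, hterm] using w.exists_ne_eq_inf_of_sum_eq_zero (by rwa [hfun]) hzero
end

section
/- Let K be an algebraically closed field equipped with a non-Archimedean additive valuation val : K → ℝ ∪ {∞}. Let t, c₁, ..., c₆ ∈ K with val(t) = 1 and val(cᵢ) = 0 for all i. Set f = c₁ + c₂x + c₃y, g = c₄x + c₅xy + t c₆y, and B = c₃c₄ − c₁c₅ − t c₂c₆, and suppose r := val(B) ≤ 1/2. Then: the resultant of f and g with respect to y has degree exactly 2 in x with nonzero constant term; every common zero of f and g in K² lies in (K\{0})²; the common zeros correspond bijectively to the roots of this resultant (counted with multiplicity, there are two); and the multiset of images of the common zeros under p ↦ (val(p₁), val(p₂)), counted with the multiplicity of the corresponding resultant root, equals {(r, 0), (1−r, 0)}. -/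
/-!
The resultant of `f` and `g` with respect to `y` is the quadratic
`-c₂c₅ x² + B x - t c₁ c₆`, and a common zero is determined by its `x`-coordinate through the
line: `y = -(c₁ + c₂ x) / c₃`. By Vieta, the valuations of the two roots add up to
`val (t c₁ c₆) = 1`, while their sum has valuation `val B = r`; since `r ≤ 1/2`, the
ultrametric inequality forces these valuations to be `r` and `1 - r`. Both are nonnegative, and
then the line (when `val x > 0`) or the conic (when `val x = 0`) gives `val y = 0`.
-/

open Polynomial

/-- The `(m+n) × (m+n)` Sylvester matrix of two polynomials `f` and `g` over a
commutative ring, regarded with formal degrees `m` and `n` respectively. -/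
noncomputable def sylvester {R : Type*} [CommRing R] (m n : ℕ) (f g : R[X]) :
    Matrix (Fin (m + n)) (Fin (m + n)) R :=
  Matrix.of fun i j =>
    if (i : ℕ) < n then
      (if (i : ℕ) ≤ (j : ℕ) ∧ (j : ℕ) ≤ (i : ℕ) + m then f.coeff (m + i - j) else 0)
    else
      (if (i : ℕ) - n ≤ (j : ℕ) ∧ (j : ℕ) ≤ ((i : ℕ) - n) + n then
        g.coeff (n + ((i : ℕ) - n) - j) else 0)

/-- The resultant of `f` and `g`, regarded with formal degrees `m` and `n`:
the determinant of the Sylvester matrix. -/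
noncomputable def resultant {R : Type*} [CommRing R] (m n : ℕ) (f g : R[X]) : R :=
  (sylvester m n f g).det

theorem resultant_one_one {R : Type*} [CommRing R] (f g : R[X]) :
    _root_.resultant 1 1 f g = f.coeff 1 * g.coeff 0 - f.coeff 0 * g.coeff 1 := by
  rw [_root_.resultant, Matrix.det_fin_two]
  simp [_root_.sylvester]

theorem map_one_eq_zero_of_map_mul {M : Type*} [MulOneClass M] (v : M → WithTop ℝ)
    (h1 : v 1 ≠ ⊤) (hmul : ∀ a b, v (a * b) = v a + v b) : v 1 = 0 := by
  lift v 1 to ℝ using h1 with a ha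
  have := hmul 1 1
  rw [one_mul, ← ha, ← WithTop.coe_add, WithTop.coe_inj] at this
  exact_mod_cast (by linarith : a = 0)

namespace AddValuation

theorem pair_eq_of_map_add {R : Type*} [Ring R] (w : AddValuation R (WithTop ℝ)) {x₁ x₂ : R}
    {r s : ℝ} (hadd : w (x₁ + x₂) = r) (hmul : w x₁ + w x₂ = s) (hrs : r ≤ s / 2) :
    ({w x₁, w x₂} : Multiset (WithTop ℝ)) = {(r : WithTop ℝ), ((s - r : ℝ) : WithTop ℝ)} := by
  wlog hle : w x₁ ≤ w x₂ generalizing x₁ x₂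
  · rw [Multiset.pair_comm]
    exact this (by rwa [add_comm]) (by rwa [add_comm]) (le_of_not_ge hle)
  have hfin := WithTop.add_ne_top.1 (hmul ▸ WithTop.coe_ne_top)
  have hmin := w.map_add x₁ x₂
  rw [min_eq_left hle, hadd] at hmin
  lift w x₁ to ℝ using hfin.1 with a ha
  lift w x₂ to ℝ using hfin.2 with b hb
  norm_cast at hmul hle hmin
  -- if the valuations differ, the smaller one is attained by the sum; if not, `r ≤ s / 2` forces it
  have hra : r ≤ a := by
    rcases hle.lt_or_eq with hlt | rfl
    · have := w.map_add_eq_of_lt_left (x := x₁) (y := x₂) (by rw [← ha, ← hb]; exact_mod_cast hlt)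
      rw [hadd, ← ha] at this
      exact WithTop.coe_le_coe.1 this.le
    · linarith
  have hb : b = s - r := by linarith
  rw [le_antisymm hmin hra, hb]

theorem map_roots_quadratic {K : Type*} [Field K] [IsAlgClosed K]
    (w : AddValuation K (WithTop ℝ)) {a b c : K} {r s : ℝ} (ha : w a = 0)
    (hb : w b = r) (hc : w c = s) (hrs : r ≤ s / 2) :
    (C a * X ^ 2 + C b * X + C c).roots.map w =
      {(r : WithTop ℝ), ((s - r : ℝ) : WithTop ℝ)} := by
  have ha0 : a ≠ 0 := w.ne_top_iff.1 (by simp [ha])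
  obtain ⟨x₁, x₂, hroots⟩ : ∃ x₁ x₂, (C a * X ^ 2 + C b * X + C c).roots = {x₁, x₂} :=
    Multiset.card_eq_two.1 (by rw [IsAlgClosed.card_roots_eq_natDegree, natDegree_quadratic ha0])
  obtain ⟨rfl, rfl⟩ := (roots_quadratic_eq_pair_iff_of_ne_zero ha0).1 hroots
  rw [hroots, Multiset.insert_eq_cons, Multiset.map_cons, Multiset.map_singleton]
  refine w.pair_eq_of_map_add ?_ ?_ hrs
  · rwa [w.map_mul, w.map_neg, ha, zero_add] at hb
  · rwa [w.map_mul, w.map_mul, ha, zero_add] at hc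

end AddValuation

section LineConic

variable {K : Type*} [Field K]

noncomputable def lineConicResultant (t c₁ c₂ c₃ c₄ c₅ c₆ : K) : K[X] :=
  C (-(c₂ * c₅)) * X ^ 2 + C (c₃ * c₄ - c₁ * c₅ - t * c₂ * c₆) * X + C (-(t * c₁ * c₆))

variable {t c₁ c₂ c₃ c₄ c₅ c₆ : K}

theorem resultant_line_conic :
    _root_.resultant 1 1 (C (C c₃) * X + C (C c₁ + C c₂ * X))
        (C (C c₅ * X + C (t * c₆)) * X + C (C c₄ * X)) =
      lineConicResultant t c₁ c₂ c₃ c₄ c₅ c₆ := by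
  rw [resultant_one_one, lineConicResultant]
  simp only [map_add, map_mul, map_sub, map_neg, coeff_add, coeff_mul_X, coeff_C, ↓reduceIte,
    coeff_mul_C, coeff_X, mul_coeff_zero, one_ne_zero, zero_mul, mul_zero, add_zero,
    zero_add]
  ring

theorem natDegree_lineConicResultant (hc₂ : c₂ ≠ 0) (hc₅ : c₅ ≠ 0) :
    (lineConicResultant t c₁ c₂ c₃ c₄ c₅ c₆).natDegree = 2 :=
  natDegree_quadratic (neg_ne_zero.2 (mul_ne_zero hc₂ hc₅))

theorem line_conic_common_zero_iff (hc₃ : c₃ ≠ 0) (x y : K) :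
    (c₁ + c₂ * x + c₃ * y = 0 ∧ c₄ * x + c₅ * x * y + t * c₆ * y = 0) ↔
      (lineConicResultant t c₁ c₂ c₃ c₄ c₅ c₆).IsRoot x ∧ y = -(c₁ + c₂ * x) / c₃ := by
  have hres : (lineConicResultant t c₁ c₂ c₃ c₄ c₅ c₆).eval x =
      c₃ * (c₄ * x + c₅ * x * y + t * c₆ * y) - (c₅ * x + t * c₆) * (c₁ + c₂ * x + c₃ * y) := by
    simp only [lineConicResultant, eval_add, eval_mul, eval_pow, eval_C, eval_X]
    ring
  have hline : c₁ + c₂ * x + c₃ * y = 0 ↔ y = -(c₁ + c₂ * x) / c₃ := by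
    rw [eq_div_iff hc₃]
    constructor <;> intro h <;> linear_combination h
  rw [IsRoot.def, hres]
  constructor
  · rintro ⟨hf, hg⟩
    exact ⟨by rw [hf, hg]; ring, hline.1 hf⟩
  · rintro ⟨hres0, hy⟩
    have hf := hline.2 hy
    rw [hf, mul_zero, sub_zero] at hres0
    exact ⟨hf, (mul_eq_zero.1 hres0).resolve_left hc₃⟩

theorem line_conic_common_zero_ne_zero (hc₁ : c₁ ≠ 0) (hc₄ : c₄ ≠ 0) (htc₆ : t * c₆ ≠ 0)
    {x y : K} (hf : c₁ + c₂ * x + c₃ * y = 0) (hg : c₄ * x + c₅ * x * y + t * c₆ * y = 0) :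
    x ≠ 0 ∧ y ≠ 0 := by
  have hxy : x = 0 → y = 0 := fun hx => by simpa [hx, htc₆] using hg
  have hyx : y = 0 → x = 0 := fun hy => by simpa [hy, hc₄] using hg
  have hxy0 : ¬(x = 0 ∧ y = 0) := fun ⟨hx, hy⟩ => hc₁ (by simpa [hx, hy] using hf)
  tauto

namespace AddValuation

variable (w : AddValuation K (WithTop ℝ))

theorem map_eq_zero_of_line_conic {x y : K} (hc₁ : w c₁ = 0) (hc₂ : 0 ≤ w c₂)
    (hc₃ : w c₃ = 0) (hc₄ : w c₄ = 0) (hc₅ : w c₅ = 0) (htc₆ : 0 < w (t * c₆))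
    (hf : c₁ + c₂ * x + c₃ * y = 0) (hg : c₄ * x + c₅ * x * y + t * c₆ * y = 0)
    (hx : 0 ≤ w x) : w y = 0 := by
  rcases hx.eq_or_lt with hx | hx
  · have hden : w (c₅ * x + t * c₆) = 0 := by
      have hlt : w (c₅ * x) < w (t * c₆) := by rwa [w.map_mul, hc₅, ← hx, add_zero]
      rw [w.map_add_eq_of_lt_left hlt, w.map_mul, hc₅, ← hx, add_zero]
    have := congrArg w (show (c₅ * x + t * c₆) * y = -(c₄ * x) by linear_combination hg)
    rwa [w.map_mul, w.map_neg, w.map_mul, hden, hc₄, ← hx, zero_add, add_zero] at this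
  · have hnum : w (c₁ + c₂ * x) = 0 := by
      have hlt : w c₁ < w (c₂ * x) := by
        rw [hc₁, w.map_mul]
        exact lt_add_of_nonneg_of_lt hc₂ hx
      rw [w.map_add_eq_of_lt_left hlt, hc₁]
    have := congrArg w (show c₃ * y = -(c₁ + c₂ * x) by linear_combination hf)
    rwa [w.map_mul, w.map_neg, hc₃, hnum, zero_add] at this

theorem map_roots_lineConicResultant [IsAlgClosed K] {r : ℝ}
    (ht : w t = ((1 : ℝ) : WithTop ℝ)) (hc₁ : w c₁ = 0) (hc₂ : w c₂ = 0) (hc₃ : w c₃ = 0)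
    (hc₄ : w c₄ = 0) (hc₅ : w c₅ = 0) (hc₆ : w c₆ = 0)
    (hB : w (c₃ * c₄ - c₁ * c₅ - t * c₂ * c₆) = r) (hr : r ≤ 1 / 2) :
    (lineConicResultant t c₁ c₂ c₃ c₄ c₅ c₆).roots.map
        (fun x => (w x, w (-(c₁ + c₂ * x) / c₃))) =
      {((r : WithTop ℝ), (0 : WithTop ℝ)), (((1 - r : ℝ) : WithTop ℝ), (0 : WithTop ℝ))} := by
  set P := lineConicResultant t c₁ c₂ c₃ c₄ c₅ c₆
  have hr0 : 0 ≤ r := by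
    have : (0 : WithTop ℝ) ≤ w (c₃ * c₄ - c₁ * c₅ - t * c₂ * c₆) :=
      w.map_le_sub (w.map_le_sub (by simp [hc₃, hc₄]) (by simp [hc₁, hc₅]))
        (by simp [ht, hc₂, hc₆])
    exact_mod_cast hB ▸ this
  have hvroots : P.roots.map w = {(r : WithTop ℝ), ((1 - r : ℝ) : WithTop ℝ)} :=
    w.map_roots_quadratic (by simp [hc₂, hc₅]) hB (by simp [ht, hc₁, hc₆]) (by linarith)
  have hvY {x : K} (hx : x ∈ P.roots) : w (-(c₁ + c₂ * x) / c₃) = 0 := by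
    have hx0 : 0 ≤ w x := by
      have := Multiset.mem_map_of_mem w hx
      rw [hvroots, Multiset.insert_eq_cons, Multiset.mem_cons, Multiset.mem_singleton] at this
      rcases this with h | h <;> rw [h] <;> exact_mod_cast (by linarith)
    obtain ⟨hf, hg⟩ := (line_conic_common_zero_iff (w.ne_top_iff.1 (by simp [hc₃])) x _).2
      ⟨isRoot_of_mem_roots hx, rfl⟩
    exact w.map_eq_zero_of_line_conic hc₁ hc₂.ge hc₃ hc₄ hc₅ (by simp [ht, hc₆]) hf hg hx0
  calc P.roots.map (fun x => (w x, w (-(c₁ + c₂ * x) / c₃)))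
      = P.roots.map (fun x => (w x, 0)) := Multiset.map_congr rfl fun x hx => by rw [hvY hx]
    _ = (P.roots.map w).map (fun z => (z, 0)) := by rw [Multiset.map_map]; rfl
    _ = _ := by simp [hvroots]

end AddValuation

end LineConic

/-- Let `K` be an algebraically closed field with a non-Archimedean
additive valuation `v`, let `v t = 1`, `v cᵢ = 0`, and set `f = c₁ + c₂x + c₃y`,
`g = c₄x + c₅xy + t c₆ y` and `B = c₃c₄ − c₁c₅ − t c₂c₆` with `r := v B ≤ 1/2`.
Then the resultant `Res` of `f` and `g` with respect to `y` has degree exactly `2` in `x`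
with nonzero constant term; every common zero of `f` and `g` in `K²` lies in the torus;
the common zeros correspond bijectively to the roots of `Res` (counted with multiplicity,
there are two); and the multiset of images of the common zeros under
`p ↦ (v p₁, v p₂)`, counted with the multiplicity of the corresponding resultant root,
equals `{(r, 0), (1 − r, 0)}`. -/
theorem trop_intersection_line_conic_generic {K : Type*} [Field K] [IsAlgClosed K]
    (v : K → WithTop ℝ)
    (hv0 : ∀ a : K, v a = ⊤ ↔ a = 0)
    (hvmul : ∀ a b : K, v (a * b) = v a + v b)
    (hvadd : ∀ a b : K, min (v a) (v b) ≤ v (a + b))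
    (t c₁ c₂ c₃ c₄ c₅ c₆ : K)
    (ht : v t = ((1 : ℝ) : WithTop ℝ))
    (hc₁ : v c₁ = 0) (hc₂ : v c₂ = 0) (hc₃ : v c₃ = 0)
    (hc₄ : v c₄ = 0) (hc₅ : v c₅ = 0) (hc₆ : v c₆ = 0)
    (r : ℝ) (hB : v (c₃ * c₄ - c₁ * c₅ - t * c₂ * c₆) = (r : WithTop ℝ)) (hr : r ≤ 1 / 2)
    (F G : K × K → K)
    (hF : ∀ p : K × K, F p = c₁ + c₂ * p.1 + c₃ * p.2)
    (hG : ∀ p : K × K, G p = c₄ * p.1 + c₅ * p.1 * p.2 + t * c₆ * p.2)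
    (Res : K[X])
    (hRes : Res = _root_.resultant 1 1
      (Polynomial.C (Polynomial.C c₃) * Polynomial.X +
        Polynomial.C (Polynomial.C c₁ + Polynomial.C c₂ * Polynomial.X))
      (Polynomial.C (Polynomial.C c₅ * Polynomial.X + Polynomial.C (t * c₆)) * Polynomial.X +
        Polynomial.C (Polynomial.C c₄ * Polynomial.X))) :
    Res.natDegree = 2 ∧ Res.coeff 0 ≠ 0 ∧
    (∀ p : K × K, F p = 0 → G p = 0 → p.1 ≠ 0 ∧ p.2 ≠ 0) ∧
    (∀ p : K × K, F p = 0 → G p = 0 → p.1 ∈ Res.roots) ∧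
    (∀ x ∈ Res.roots, ∃! y : K, F (x, y) = 0 ∧ G (x, y) = 0) ∧
    Multiset.card Res.roots = 2 ∧
    (∃ Y : K → K, (∀ x ∈ Res.roots, F (x, Y x) = 0 ∧ G (x, Y x) = 0) ∧
      Res.roots.map (fun x => (v x, v (Y x))) =
        {((r : WithTop ℝ), (0 : WithTop ℝ)), (((1 - r : ℝ) : WithTop ℝ), (0 : WithTop ℝ))}) := by
  let w : AddValuation K (WithTop ℝ) := .of v ((hv0 0).2 rfl)
    (map_one_eq_zero_of_map_mul v (fun h => one_ne_zero ((hv0 1).1 h)) hvmul) hvadd hvmul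
  have hne {a : K} (ha : v a = 0) : a ≠ 0 := w.ne_top_iff.1 (by simp [w, ha])
  have ht0 : t ≠ 0 := w.ne_top_iff.1 (by simp [w, ht])
  rw [resultant_line_conic] at hRes
  have hdeg : Res.natDegree = 2 := hRes ▸ natDegree_lineConicResultant (hne hc₂) (hne hc₅)
  have hiff (x y : K) :
      (F (x, y) = 0 ∧ G (x, y) = 0) ↔ x ∈ Res.roots ∧ y = -(c₁ + c₂ * x) / c₃ := by
    rw [hF, hG, mem_roots (ne_zero_of_natDegree_gt (hdeg ▸ two_pos)), hRes]
    exact line_conic_common_zero_iff (hne hc₃) x y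
  refine ⟨hdeg, by simp [hRes, lineConicResultant, hne hc₁, hne hc₆, ht0], fun p hf hg => ?_,
    fun p hf hg => ((hiff p.1 p.2).1 ⟨hf, hg⟩).1,
    fun x hx => ⟨_, (hiff x _).2 ⟨hx, rfl⟩, fun y hy => ((hiff x y).1 hy).2⟩,
    IsAlgClosed.card_roots_eq_natDegree.trans hdeg, fun x => -(c₁ + c₂ * x) / c₃,
    fun x hx => (hiff x _).2 ⟨hx, rfl⟩,
    hRes ▸ w.map_roots_lineConicResultant ht hc₁ hc₂ hc₃ hc₄ hc₅ hc₆ hB hr⟩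
  exact line_conic_common_zero_ne_zero (hne hc₁) (hne hc₄) (mul_ne_zero ht0 (hne hc₆))
    ((hF p).symm.trans hf) ((hG p).symm.trans hg)
end

section
/- Let K be an algebraically closed field equipped with a non-Archimedean additive valuation val : K → ℝ ∪ {∞}. Let t, c₁, ..., c₆ ∈ K with val(t) = 1 and val(cᵢ) = 0 for all i. Set f = c₁ + c₂x + c₃y, g = c₄x + c₅xy + t c₆y, and B = c₃c₄ − c₁c₅ − t c₂c₆, and suppose val(B) ≥ 1/2 (this includes the case B = 0). Then every common zero of f and g in K² lies in (K\{0})², and every common zero p = (p₁, p₂) satisfies (val(p₁), val(p₂)) = (1/2, 0). -/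
/-!
Eliminating `y` from `f = g = 0` gives `c₂ c₅ x² = B x - t c₁ c₆`. The three terms have
valuations `2 val x`, at least `1/2 + val x`, and `1`; since the minimum of the valuations of
the terms of a vanishing sum is attained twice, this forces `val x = 1/2`. Then `f = 0` reads
`c₃ y = -(c₁ + c₂ x)` with `val c₁ = 0 < val (c₂ x)`, so `val y = 0`.
-/

theorem line_conic_ne_zero_of_common_zero {R : Type*} [CommRing R] [NoZeroDivisors R]
    {t c₁ c₂ c₃ c₄ c₅ c₆ x y : R}
    (ht : t ≠ 0) (hc₁ : c₁ ≠ 0) (hc₄ : c₄ ≠ 0) (hc₆ : c₆ ≠ 0)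
    (hf : c₁ + c₂ * x + c₃ * y = 0) (hg : c₄ * x + c₅ * x * y + t * c₆ * y = 0) :
    x ≠ 0 ∧ y ≠ 0 := by
  have not_both : ¬(x = 0 ∧ y = 0) := by
    rintro ⟨rfl, rfl⟩
    simp [hc₁] at hf
  constructor
  · rintro rfl
    simp [ht, hc₆] at hg
    exact not_both ⟨rfl, hg⟩
  · rintro rfl
    simp [hc₄] at hg
    exact not_both ⟨hg, rfl⟩

theorem line_conic_resultant {R : Type*} [CommRing R] {t c₁ c₂ c₃ c₄ c₅ c₆ x y : R}
    (hf : c₁ + c₂ * x + c₃ * y = 0) (hg : c₄ * x + c₅ * x * y + t * c₆ * y = 0) :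
    c₂ * c₅ * x ^ 2 = (c₃ * c₄ - c₁ * c₅ - t * c₂ * c₆) * x - t * c₁ * c₆ := by
  linear_combination (c₅ * x + t * c₆) * hf - c₃ * hg

namespace AddValuation

theorem map_eq_of_sq_eq_add {K : Type*} [Field K] (v : AddValuation K (WithTop ℝ))
    {a b c x : K} {s : ℝ} (ha : v a = 0) (hb : (s : WithTop ℝ) ≤ v b)
    (hc : v c = ((2 * s : ℝ) : WithTop ℝ)) (hx : a * x ^ 2 = b * x + c) :
    v x = s := by
  have hx0 : x ≠ 0 := by
    rintro rfl
    have hc0 : c = 0 := by simpa using hx.symm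
    rw [hc0, v.map_zero] at hc
    exact WithTop.top_ne_coe hc
  obtain ⟨r, hr⟩ := WithTop.ne_top_iff_exists.mp (v.ne_top_iff.mpr hx0)
  have hquad : v (a * x ^ 2) = ((2 * r : ℝ) : WithTop ℝ) := by
    rw [v.map_mul, v.map_pow, ha, ← hr, zero_add, two_mul, two_nsmul]
    norm_cast
  have hlin : ((s + r : ℝ) : WithTop ℝ) ≤ v (b * x) := by
    rw [v.map_mul, ← hr, WithTop.coe_add]
    gcongr
  rw [← hr, WithTop.coe_inj]
  rcases lt_trichotomy r s with hrs | rfl | hrs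
  · have : ((2 * r : ℝ) : WithTop ℝ) < v (b * x + c) :=
      v.map_lt_add (lt_of_lt_of_le (by norm_cast; linarith) hlin)
        (by rw [hc]; norm_cast; linarith)
    rw [← hx, hquad] at this
    exact (lt_irrefl _ this).elim
  · rfl
  · have hlt : v c < v (b * x) := lt_of_lt_of_le (by rw [hc]; norm_cast; linarith) hlin
    have := v.map_add_eq_of_lt_right hlt
    rw [← hx, hquad, hc, WithTop.coe_inj] at this
    linarith

theorem map_eq_zero_of_add_add_eq_zero {R Γ₀ : Type*} [Ring R]
    [LinearOrderedAddCommMonoidWithTop Γ₀] (v : AddValuation R Γ₀) {c₁ c₂ c₃ x y : R}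
    (hc₁ : v c₁ = 0) (hc₂ : 0 ≤ v c₂) (hc₃ : v c₃ = 0) (hx : 0 < v x)
    (h : c₁ + c₂ * x + c₃ * y = 0) : v y = 0 := by
  have hlt : v c₁ < v (c₂ * x) := by
    rw [hc₁, v.map_mul]
    exact lt_of_lt_of_le hx (le_add_of_nonneg_left hc₂)
  calc v y = v (c₃ * y) := by rw [v.map_mul, hc₃, zero_add]
    _ = v (-(c₁ + c₂ * x)) := by rw [eq_neg_of_add_eq_zero_right h]
    _ = 0 := by rw [v.map_neg, v.map_add_eq_of_lt_left hlt, hc₁]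

end AddValuation

theorem trop_intersection_line_conic_degenerate_general {K : Type*} [Field K]
    (v : K → WithTop ℝ)
    (hv0 : ∀ a : K, v a = ⊤ ↔ a = 0)
    (hvmul : ∀ a b : K, v (a * b) = v a + v b)
    (hvadd : ∀ a b : K, min (v a) (v b) ≤ v (a + b))
    (t c₁ c₂ c₃ c₄ c₅ c₆ : K)
    (ht : v t = ((1 : ℝ) : WithTop ℝ))
    (hc₁ : v c₁ = 0) (hc₂ : v c₂ = 0) (hc₃ : v c₃ = 0)
    (hc₄ : v c₄ = 0) (hc₅ : v c₅ = 0) (hc₆ : v c₆ = 0)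
    (hB : ((1 / 2 : ℝ) : WithTop ℝ) ≤ v (c₃ * c₄ - c₁ * c₅ - t * c₂ * c₆)) :
    ∀ p : K × K, c₁ + c₂ * p.1 + c₃ * p.2 = 0 →
      c₄ * p.1 + c₅ * p.1 * p.2 + t * c₆ * p.2 = 0 →
      (p.1 ≠ 0 ∧ p.2 ≠ 0) ∧ v p.1 = ((1 / 2 : ℝ) : WithTop ℝ) ∧ v p.2 = 0 := by
  intro p hf hg
  have hv1 : v 1 = 0 :=
    WithTop.add_left_cancel ((hv0 1).not.mpr one_ne_zero) (by rw [← hvmul, mul_one, add_zero])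
  let w : AddValuation K (WithTop ℝ) := AddValuation.of v ((hv0 0).mpr rfl) hv1 hvadd hvmul
  have ne_zero (a : K) (ha : v a ≠ ⊤) : a ≠ 0 := (hv0 a).not.mp ha
  have hx : v p.1 = ((1 / 2 : ℝ) : WithTop ℝ) := by
    refine w.map_eq_of_sq_eq_add (a := c₂ * c₅) (c := -(t * c₁ * c₆)) ?_ hB ?_ ?_
    · simp [w, hc₂, hc₅]
    · simp [w, ht, hc₁, hc₆]
    · rw [line_conic_resultant hf hg, sub_eq_add_neg]
  have htorus : p.1 ≠ 0 ∧ p.2 ≠ 0 :=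
    line_conic_ne_zero_of_common_zero (ne_zero t (by simp [ht])) (ne_zero c₁ (by simp [hc₁]))
      (ne_zero c₄ (by simp [hc₄])) (ne_zero c₆ (by simp [hc₆])) hf hg
  exact ⟨htorus, hx, w.map_eq_zero_of_add_add_eq_zero hc₁ hc₂.ge hc₃ (by simp [w, hx]) hf⟩

/-- Let `K` be an algebraically closed field with a non-Archimedean
additive valuation `v`, let `v t = 1`, `v cᵢ = 0`, and set `f = c₁ + c₂x + c₃y`,
`g = c₄x + c₅xy + t c₆ y` and `B = c₃c₄ − c₁c₅ − t c₂c₆`.  If `v B ≥ 1/2` (this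
includes `B = 0`), then every common zero of `f` and `g` in `K²` lies in the torus
`(K \ {0})²`, and every common zero `p = (p₁, p₂)` satisfies
`(v p₁, v p₂) = (1/2, 0)`. -/
theorem trop_intersection_line_conic_degenerate {K : Type*} [Field K] [IsAlgClosed K]
    (v : K → WithTop ℝ)
    (hv0 : ∀ a : K, v a = ⊤ ↔ a = 0)
    (hvmul : ∀ a b : K, v (a * b) = v a + v b)
    (hvadd : ∀ a b : K, min (v a) (v b) ≤ v (a + b))
    (t c₁ c₂ c₃ c₄ c₅ c₆ : K)
    (ht : v t = ((1 : ℝ) : WithTop ℝ))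
    (hc₁ : v c₁ = 0) (hc₂ : v c₂ = 0) (hc₃ : v c₃ = 0)
    (hc₄ : v c₄ = 0) (hc₅ : v c₅ = 0) (hc₆ : v c₆ = 0)
    (hB : ((1 / 2 : ℝ) : WithTop ℝ) ≤ v (c₃ * c₄ - c₁ * c₅ - t * c₂ * c₆)) :
    ∀ p : K × K, c₁ + c₂ * p.1 + c₃ * p.2 = 0 →
      c₄ * p.1 + c₅ * p.1 * p.2 + t * c₆ * p.2 = 0 →
      (p.1 ≠ 0 ∧ p.2 ≠ 0) ∧ v p.1 = ((1 / 2 : ℝ) : WithTop ℝ) ∧ v p.2 = 0 :=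
  trop_intersection_line_conic_degenerate_general v hv0 hvmul hvadd t c₁ c₂ c₃ c₄ c₅ c₆ ht hc₁ hc₂
    hc₃ hc₄ hc₅ hc₆ hB
end
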